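/- Let α ∈ (0,1), λ > 0, g a positive integer, and t̃ a real number satisfying (λ(1-α)(g-1))^{1/(1-α)} < t̃ ≤ (λ(1-α)g)^{1/(1-α)}. Then t̃ - (λ(1-α)(g-1))^{1/(1-α)} ≤ λ t̃^α · (t̃^{1-α}/(λ(1-α)) - g + 1). -/

import Mathlib

/-! With `β = 1 - α`, `a = λβ(g - 1)` and `u = t^β`, the claim is the tangent-line inequality
`u^(1/β) - a^(1/β) ≤ (1/β) u^(1/β - 1) (u - a)` for the convex function `x ↦ x^(1/β)`,
since `u^(1/β) = t` and `u^(1/β - 1) = t^α`. -/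

theorem Real.rpow_sub_rpow_le_mul_rpow_sub_one_mul {p a u : ℝ} (hp : 1 ≤ p) (ha : 0 ≤ a)
    (hu : 0 < u) : u ^ p - a ^ p ≤ p * u ^ (p - 1) * (u - a) := by
  -- Bernoulli's inequality at `a / u`, rescaled by `u ^ p`
  have bernoulli : 1 + p * (a / u - 1) ≤ a ^ p / u ^ p := by
    rw [← Real.div_rpow ha hu.le]
    simpa using one_add_mul_self_le_rpow_one_add (s := a / u - 1)
      (by linarith [div_nonneg ha hu.le]) hp
  have hup : u ^ p = u ^ (p - 1) * u := by
    rw [← Real.rpow_add_one hu.ne']; ring_nf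
  rw [le_div_iff₀ (by positivity), hup] at bernoulli
  have expand : (1 + p * (a / u - 1)) * (u ^ (p - 1) * u) =
      u ^ (p - 1) * u + p * u ^ (p - 1) * (a - u) := by
    field_simp
  linarith

theorem stmt_4_general (α lam : ℝ) (hα : α ∈ Set.Ioo (0 : ℝ) 1) (hlam : 0 < lam)
    (g : ℕ) (hg : 0 < g) (t : ℝ)
    (h₁ : (lam * (1 - α) * ((g : ℝ) - 1)) ^ (1 / (1 - α)) < t) :
    t - (lam * (1 - α) * ((g : ℝ) - 1)) ^ (1 / (1 - α)) ≤
      lam * t ^ α * (t ^ (1 - α) / (lam * (1 - α)) - (g : ℝ) + 1) := by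
  obtain ⟨hα0, hα1⟩ := hα
  have hβ : 0 < 1 - α := by linarith
  have ha : 0 ≤ lam * (1 - α) * ((g : ℝ) - 1) :=
    mul_nonneg (by positivity) (sub_nonneg.mpr (Nat.one_le_cast.mpr hg))
  have ht : 0 < t := (Real.rpow_nonneg ha _).trans_lt h₁
  have tangent := Real.rpow_sub_rpow_le_mul_rpow_sub_one_mul
    (one_le_one_div hβ (by linarith)) ha (Real.rpow_pos_of_pos ht (1 - α))
  have ht_pow : (t ^ (1 - α)) ^ (1 / (1 - α)) = t := by
    rw [← Real.rpow_mul ht.le, mul_one_div_cancel hβ.ne', Real.rpow_one]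
  have ht_pow_sub_one : (t ^ (1 - α)) ^ (1 / (1 - α) - 1) = t ^ α := by
    rw [← Real.rpow_mul ht.le]
    congr 1
    field_simp
    ring
  rw [ht_pow, ht_pow_sub_one] at tangent
  convert tangent using 1
  field_simp
  ring

/-- Inequality (13) of the SW-UCB# analysis. -/
theorem stmt_4 (α lam : ℝ) (hα : α ∈ Set.Ioo (0 : ℝ) 1) (hlam : 0 < lam)
    (g : ℕ) (hg : 0 < g) (t : ℝ)
    (h₁ : (lam * (1 - α) * ((g : ℝ) - 1)) ^ (1 / (1 - α)) < t)
    (h₂ : t ≤ (lam * (1 - α) * (g : ℝ)) ^ (1 / (1 - α))) :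
    t - (lam * (1 - α) * ((g : ℝ) - 1)) ^ (1 / (1 - α)) ≤
      lam * t ^ α * (t ^ (1 - α) / (lam * (1 - α)) - (g : ℝ) + 1) :=
  stmt_4_general α lam hα hlam g hg t h₁
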